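/- arXiv:2411.12305 — 5 statements merged into one kernel-verified Lean document; each statement's English description precedes it below -/
import Mathlib

section
/- Let Ω ⊆ ℝ² be an open set and let β : Ω → ℝ² be a continuously differentiable vector field with β(x) ≠ 0 for every x ∈ Ω, with divergence div β = 0 on Ω, and such that the normalized field b := β/‖β‖ satisfies div b ≥ 0 on Ω. Then the scalar function w(x) := ‖β(x)‖ is non-increasing along the flow of β; precisely, for every x ∈ Ω the directional derivative of w at x in the direction β(x) satisfies (Dw)(x)(β(x)) ≤ 0. -/
/-!
With `w = ‖β‖`, the product rule for the divergence gives
`div (w⁻¹ • β) = w⁻¹ * div β - Dw(β) / w²`. Since `div β = 0`, the hypothesis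
`div (w⁻¹ • β) ≥ 0` says exactly `Dw(β) / w² ≤ 0`.
-/

/-- Divergence of a vector field on ℝ² (EuclideanSpace ℝ (Fin 2)):
div β x = ∑ i, ∂βᵢ/∂xᵢ (x), expressed via the Fréchet derivative. -/
noncomputable def divergence2
    (β : EuclideanSpace ℝ (Fin 2) → EuclideanSpace ℝ (Fin 2))
    (x : EuclideanSpace ℝ (Fin 2)) : ℝ :=
  ∑ i : Fin 2, fderiv ℝ β x (EuclideanSpace.single i 1) i

theorem ContinuousLinearMap.sum_apply_single_mul {ι : Type*} [Fintype ι] [DecidableEq ι]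
    (L : EuclideanSpace ℝ ι →L[ℝ] ℝ) (v : EuclideanSpace ℝ ι) :
    ∑ i, L (EuclideanSpace.single i 1) * v i = L v := by
  conv_rhs => rw [← (EuclideanSpace.basisFun ι ℝ).sum_repr v]
  simp [map_sum, mul_comm]

theorem fderiv_inv_comp_apply {E : Type*} [NormedAddCommGroup E] [NormedSpace ℝ E]
    {f : E → ℝ} {x : E} (hf : DifferentiableAt ℝ f x) (hx : f x ≠ 0) (v : E) :
    fderiv ℝ (fun y => (f y)⁻¹) x v = -fderiv ℝ f x v / f x ^ 2 := by
  have h : HasFDerivAt (fun y => (f y)⁻¹) _ x := (hasFDerivAt_inv hx).comp x hf.hasFDerivAt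
  rw [h.fderiv]
  simp [div_eq_mul_inv, mul_comm]

theorem divergence2_smul {f : EuclideanSpace ℝ (Fin 2) → ℝ}
    {V : EuclideanSpace ℝ (Fin 2) → EuclideanSpace ℝ (Fin 2)} {x : EuclideanSpace ℝ (Fin 2)}
    (hf : DifferentiableAt ℝ f x) (hV : DifferentiableAt ℝ V x) :
    divergence2 (fun y => f y • V y) x = f x * divergence2 V x + fderiv ℝ f x (V x) := by
  rw [divergence2, divergence2, fderiv_fun_smul hf hV,
    ← (fderiv ℝ f x).sum_apply_single_mul, Finset.mul_sum, ← Finset.sum_add_distrib]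
  simp

theorem divergence2_inv_smul {f : EuclideanSpace ℝ (Fin 2) → ℝ}
    {V : EuclideanSpace ℝ (Fin 2) → EuclideanSpace ℝ (Fin 2)} {x : EuclideanSpace ℝ (Fin 2)}
    (hf : DifferentiableAt ℝ f x) (hV : DifferentiableAt ℝ V x) (hx : f x ≠ 0) :
    divergence2 (fun y => (f y)⁻¹ • V y) x
      = (f x)⁻¹ * divergence2 V x - fderiv ℝ f x (V x) / f x ^ 2 := by
  rw [divergence2_smul (f := fun y => (f y)⁻¹) (hf.inv hx) hV,
    fderiv_inv_comp_apply hf hx, neg_div, sub_eq_add_neg]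

/-- Let Ω ⊆ ℝ² be open, β : Ω → ℝ² a C¹ vector field with β ≠ 0 on Ω,
div β = 0 on Ω, and div (β/‖β‖) ≥ 0 on Ω. Then w := ‖β‖ is non-increasing along the
flow of β: for every x ∈ Ω, the Fréchet derivative of w at x applied to β(x) is ≤ 0. -/
theorem stmt0
    (Ω : Set (EuclideanSpace ℝ (Fin 2))) (hΩ : IsOpen Ω)
    (β : EuclideanSpace ℝ (Fin 2) → EuclideanSpace ℝ (Fin 2))
    (hβ : ContDiffOn ℝ 1 β Ω)
    (hne : ∀ x ∈ Ω, β x ≠ 0)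
    (hdivβ : ∀ x ∈ Ω, divergence2 β x = 0)
    (hdivb : ∀ x ∈ Ω, 0 ≤ divergence2 (fun y => ‖β y‖⁻¹ • β y) x) :
    ∀ x ∈ Ω, fderiv ℝ (fun y => ‖β y‖) x (β x) ≤ 0 := by
  intro x hx
  have hβx : DifferentiableAt ℝ β x :=
    (hβ.contDiffAt (hΩ.mem_nhds hx)).differentiableAt one_ne_zero
  have hw : DifferentiableAt ℝ (fun y => ‖β y‖) x := hβx.norm ℝ (hne x hx)
  have hw_ne : ‖β x‖ ≠ 0 := norm_ne_zero_iff.mpr (hne x hx)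
  have hdiv := hdivb x hx
  rw [divergence2_inv_smul hw hβx hw_ne, hdivβ x hx, mul_zero, zero_sub, neg_nonneg] at hdiv
  simpa using (div_le_iff₀ (by positivity)).1 hdiv
end

section
/- Let β : ℝ² → ℝ² be a continuously differentiable vector field with β(x) ≠ 0 for all x and divergence div β = 0 everywhere, let b := β/‖β‖, and let μ > 0 and σ > 0 be constants. Then for every continuously differentiable function v : ℝ² → ℝ with compact support, the quadratic form s(v,v) := ∫_{ℝ²} ( μ (b(x)·∇v(x))² + ‖β(x)‖ v(x) (b(x)·∇v(x)) + σ v(x)² ) dx satisfies s(v,v) ≥ σ ∫_{ℝ²} v(x)² dx. -/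
open MeasureTheory

section IntegrationByParts

variable {E : Type*} [NormedAddCommGroup E] [NormedSpace ℝ E] [FiniteDimensional ℝ E]
  [MeasurableSpace E] [BorelSpace E] {μ : Measure E} [μ.IsAddHaarMeasure]

theorem integral_mul_fderiv_eq_neg_fderiv_mul_of_hasCompactSupport {f g : E → ℝ}
    (hf : ContDiff ℝ 1 f) (hg : ContDiff ℝ 1 g) (hgs : HasCompactSupport g) (w : E) :
    ∫ x, f x * fderiv ℝ g x w ∂μ = -∫ x, fderiv ℝ f x w * g x ∂μ := by
  have hf' := hf.continuous_fderiv one_ne_zero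
  have hg' := hg.continuous_fderiv one_ne_zero
  refine integral_mul_fderiv_eq_neg_fderiv_mul_of_integrable ?_ ?_ ?_
    (fun x _ ↦ hf.differentiable one_ne_zero x) (fun x _ ↦ hg.differentiable one_ne_zero x)
  · exact (by fun_prop : Continuous _).integrable_of_hasCompactSupport hgs.mul_left
  · exact (by fun_prop : Continuous _).integrable_of_hasCompactSupport
      (hgs.fderiv_apply ℝ w).mul_left
  · exact (by fun_prop : Continuous _).integrable_of_hasCompactSupport hgs.mul_left

end IntegrationByParts

section Divergence

variable {ι : Type*} [Fintype ι]

theorem fderiv_euclidean_apply {H : Type*} [NormedAddCommGroup H] [NormedSpace ℝ H]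
    {f : H → EuclideanSpace ℝ ι} {x : H} (hf : DifferentiableAt ℝ f x) (i : ι) (w : H) :
    fderiv ℝ (fun y ↦ f y i) x w = fderiv ℝ f x w i := by
  have := hasFDerivWithinAt_euclidean.1 (hf.hasFDerivAt.hasFDerivWithinAt (s := Set.univ)) i
  rw [(hasFDerivWithinAt_univ.1 this).fderiv]
  rfl

variable [DecidableEq ι]

theorem fderiv_apply_eq_sum_mul {u : EuclideanSpace ℝ ι → ℝ} (x w : EuclideanSpace ℝ ι) :
    fderiv ℝ u x w = ∑ i, w i * fderiv ℝ u x (EuclideanSpace.single i 1) := by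
  conv_lhs => rw [← (EuclideanSpace.basisFun ι ℝ).sum_repr w]
  simp [map_sum, map_smul]

theorem integral_fderiv_apply_eq_neg_integral_divergence_mul
    {β : EuclideanSpace ℝ ι → EuclideanSpace ℝ ι} (hβ : ContDiff ℝ 1 β)
    {u : EuclideanSpace ℝ ι → ℝ} (hu : ContDiff ℝ 1 u) (hsupp : HasCompactSupport u) :
    ∫ x, fderiv ℝ u x (β x) =
      -∫ x, (∑ i, fderiv ℝ β x (EuclideanSpace.single i 1) i) * u x := by
  have hβi (i : ι) : ContDiff ℝ 1 (fun x ↦ β x i) := contDiff_euclidean.1 hβ i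
  have hβ' := hβ.continuous_fderiv one_ne_zero
  have hu' := hu.continuous_fderiv one_ne_zero
  have hint (i : ι) : Integrable (fun x ↦ β x i * fderiv ℝ u x (EuclideanSpace.single i 1)) :=
    (by fun_prop : Continuous _).integrable_of_hasCompactSupport
      (hsupp.fderiv_apply ℝ _).mul_left
  have hint' (i : ι) : Integrable (fun x ↦ fderiv ℝ β x (EuclideanSpace.single i 1) i * u x) :=
    (by fun_prop : Continuous _).integrable_of_hasCompactSupport hsupp.mul_left
  simp_rw [fderiv_apply_eq_sum_mul _ (β _), integral_finsetSum _ (fun i _ ↦ hint i),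
    integral_mul_fderiv_eq_neg_fderiv_mul_of_hasCompactSupport (hβi _) hu hsupp,
    fderiv_euclidean_apply (hβ.differentiable one_ne_zero _), Finset.sum_mul,
    integral_finsetSum _ (fun i _ ↦ hint' i), Finset.sum_neg_distrib]

theorem integral_mul_fderiv_apply_eq_zero_of_divergence_eq_zero
    {β : EuclideanSpace ℝ ι → EuclideanSpace ℝ ι} (hβ : ContDiff ℝ 1 β)
    (hdiv : ∀ x, ∑ i, fderiv ℝ β x (EuclideanSpace.single i 1) i = 0)
    {v : EuclideanSpace ℝ ι → ℝ} (hv : ContDiff ℝ 1 v) (hsupp : HasCompactSupport v) :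
    ∫ x, v x * fderiv ℝ v x (β x) = 0 := by
  have hsq : ∀ x, fderiv ℝ (fun y ↦ v y ^ 2) x (β x) = 2 * (v x * fderiv ℝ v x (β x)) := by
    intro x
    rw [fderiv_fun_pow 2 (hv.differentiable one_ne_zero x)]
    simp only [smul_apply, nsmul_eq_mul, smul_eq_mul]
    ring
  have := integral_fderiv_apply_eq_neg_integral_divergence_mul hβ (hv.pow 2)
    (hsupp.comp_left (g := (· ^ 2)) (zero_pow two_ne_zero))
  simp_rw [hsq, hdiv, zero_mul, integral_zero, neg_zero, integral_const_mul] at this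
  exact (mul_eq_zero.1 this).resolve_left two_ne_zero

end Divergence

section Gradient

variable {E : Type*} [NormedAddCommGroup E] [InnerProductSpace ℝ E] [CompleteSpace E]

theorem inner_inv_norm_smul_gradient (b : E) (f : E → ℝ) (x : E) :
    inner ℝ (‖b‖⁻¹ • b) (gradient f x) = ‖b‖⁻¹ * fderiv ℝ f x b := by
  rw [real_inner_smul_left, real_inner_comm, gradient, InnerProductSpace.toDual_symm_apply]

theorem norm_mul_inner_inv_norm_smul_gradient (b : E) (f : E → ℝ) (x : E) :
    ‖b‖ * inner ℝ (‖b‖⁻¹ • b) (gradient f x) = fderiv ℝ f x b := by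
  rcases eq_or_ne b 0 with rfl | hb
  · simp
  · rw [inner_inv_norm_smul_gradient, ← mul_assoc, mul_inv_cancel₀ (norm_ne_zero_iff.2 hb),
      one_mul]

theorem abs_inner_inv_norm_smul_gradient_le (b : E) (f : E → ℝ) (x : E) :
    |inner ℝ (‖b‖⁻¹ • b) (gradient f x)| ≤ ‖fderiv ℝ f x‖ := by
  rw [inner_inv_norm_smul_gradient, abs_mul, abs_inv, abs_norm]
  calc ‖b‖⁻¹ * |fderiv ℝ f x b| ≤ ‖b‖⁻¹ * (‖fderiv ℝ f x‖ * ‖b‖) := by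
        gcongr; exact (fderiv ℝ f x).le_opNorm b
    _ = ‖b‖⁻¹ * ‖b‖ * ‖fderiv ℝ f x‖ := by ring
    _ ≤ 1 * ‖fderiv ℝ f x‖ := by gcongr; exact inv_mul_le_one_of_le₀ le_rfl (norm_nonneg b)
    _ = ‖fderiv ℝ f x‖ := one_mul _

variable [FiniteDimensional ℝ E] [MeasurableSpace E] [BorelSpace E] {μ : Measure E}
  [IsFiniteMeasureOnCompacts μ]

theorem integrable_inner_inv_norm_smul_gradient_sq {β : E → E} (hβ : Continuous β) {v : E → ℝ}
    (hv : ContDiff ℝ 1 v) (hsupp : HasCompactSupport v) :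
    Integrable (fun x ↦ inner ℝ (‖β x‖⁻¹ • β x) (gradient v x) ^ 2) μ := by
  have hv' := hv.continuous_fderiv one_ne_zero
  have : Continuous (gradient v) := (InnerProductSpace.toDual ℝ E).symm.continuous.comp hv'
  refine Integrable.mono' (g := fun x ↦ ‖fderiv ℝ v x‖ ^ 2) ?_ (by fun_prop) (.of_forall fun x ↦ ?_)
  · exact (by fun_prop : Continuous _).integrable_of_hasCompactSupport
      ((hsupp.fderiv ℝ).norm.comp_left (g := (· ^ 2)) (zero_pow two_ne_zero))
  · rw [Real.norm_eq_abs, abs_pow]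
    exact pow_le_pow_left₀ (abs_nonneg _) (abs_inner_inv_norm_smul_gradient_le _ _ _) 2

end Gradient

theorem stmt3_general
    (β : EuclideanSpace ℝ (Fin 2) → EuclideanSpace ℝ (Fin 2))
    (hβ : ContDiff ℝ 1 β)
    (hdiv : ∀ x, divergence2 β x = 0)
    (μ σ : ℝ) (hμ : 0 < μ)
    (v : EuclideanSpace ℝ (Fin 2) → ℝ)
    (hv : ContDiff ℝ 1 v)
    (hsupp : HasCompactSupport v) :
    σ * ∫ x, (v x) ^ 2 ≤
      ∫ x, (μ * (inner ℝ (‖β x‖⁻¹ • β x) (gradient v x) : ℝ) ^ 2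
        + ‖β x‖ * v x * (inner ℝ (‖β x‖⁻¹ • β x) (gradient v x) : ℝ)
        + σ * (v x) ^ 2) := by
  set t := fun x ↦ (inner ℝ (‖β x‖⁻¹ • β x) (gradient v x) : ℝ)
  have hsplit (x) : μ * t x ^ 2 + ‖β x‖ * v x * t x + σ * v x ^ 2 =
      (μ * t x ^ 2 + σ * v x ^ 2) + v x * fderiv ℝ v x (β x) := by
    rw [← norm_mul_inner_inv_norm_smul_gradient]; ring
  have ht : Integrable fun x ↦ μ * t x ^ 2 :=
    (integrable_inner_inv_norm_smul_gradient_sq hβ.continuous hv hsupp).const_mul μ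
  have hv' := hv.continuous_fderiv one_ne_zero
  have hβ' := hβ.continuous
  have hv2 : Integrable fun x ↦ σ * v x ^ 2 :=
    (by fun_prop : Continuous _).integrable_of_hasCompactSupport
      ((hsupp.comp_left (g := (· ^ 2)) (zero_pow two_ne_zero)).mul_left (f := fun _ ↦ σ))
  have hvD : Integrable fun x ↦ v x * fderiv ℝ v x (β x) :=
    (by fun_prop : Continuous _).integrable_of_hasCompactSupport hsupp.mul_right
  have hD := integral_mul_fderiv_apply_eq_zero_of_divergence_eq_zero hβ hdiv hv hsupp
  calc σ * ∫ x, v x ^ 2 = ∫ x, σ * v x ^ 2 := (integral_const_mul σ _).symm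
    _ ≤ (∫ x, μ * t x ^ 2) + ∫ x, σ * v x ^ 2 :=
      le_add_of_nonneg_left (integral_nonneg fun x ↦ mul_nonneg hμ.le (sq_nonneg (t x)))
    _ = ∫ x, (μ * t x ^ 2 + σ * v x ^ 2) + v x * fderiv ℝ v x (β x) := by
      rw [integral_add (f := fun x ↦ μ * t x ^ 2 + σ * v x ^ 2) (ht.add hv2) hvD, hD, add_zero,
        integral_add ht hv2]
    _ = _ := integral_congr_ae (.of_forall fun x ↦ (hsplit x).symm)

/-- Let β : ℝ² → ℝ² be a C¹ vector field with β ≠ 0 everywhere and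
div β = 0 everywhere, b := β/‖β‖, and let μ > 0, σ > 0. Then for every C¹ function
v : ℝ² → ℝ with compact support,
s(v,v) := ∫ (μ (b·∇v)² + ‖β‖ v (b·∇v) + σ v²) dx ≥ σ ∫ v² dx. -/
theorem stmt3
    (β : EuclideanSpace ℝ (Fin 2) → EuclideanSpace ℝ (Fin 2))
    (hβ : ContDiff ℝ 1 β)
    (hne : ∀ x, β x ≠ 0)
    (hdiv : ∀ x, divergence2 β x = 0)
    (μ σ : ℝ) (hμ : 0 < μ) (hσ : 0 < σ)
    (v : EuclideanSpace ℝ (Fin 2) → ℝ)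
    (hv : ContDiff ℝ 1 v)
    (hsupp : HasCompactSupport v) :
    σ * ∫ x, (v x) ^ 2 ≤
      ∫ x, (μ * (inner ℝ (‖β x‖⁻¹ • β x) (gradient v x) : ℝ) ^ 2
        + ‖β x‖ * v x * (inner ℝ (‖β x‖⁻¹ • β x) (gradient v x) : ℝ)
        + σ * (v x) ^ 2) :=
  stmt3_general β hβ hdiv μ σ hμ v hv hsupp
end

section
/- Let μ > 0 and Δt > 0 be real constants and let θ ≥ 1/2. Then for every twice continuously differentiable function u : ℝ² → ℝ with compact support, ∫_{ℝ²} ( u(x,y) − (θ−1)Δt μ (∂²u/∂y²)(x,y) )² dx dy ≤ ∫_{ℝ²} ( u(x,y) − θΔt μ (∂²u/∂y²)(x,y) )² dx dy. In other words, ‖R_{θ−1} u‖_{L²} ≤ ‖R_θ u‖_{L²}, where R_θ u := −θΔt μ ∂²u/∂y² + u. -/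
/-!
With `a = Δt μ`, expanding the square gives
`‖R_c u‖² = ‖u‖² − 2ca ∫ u ∂²_y u + c²a² ‖∂²_y u‖²`, and integrating by parts along each
vertical line turns the cross term into `2ca ‖∂_y u‖²`. Hence
`‖R_θ u‖² − ‖R_{θ−1} u‖² = 2a ‖∂_y u‖² + (2θ − 1) a² ‖∂²_y u‖² ≥ 0`.
-/

open MeasureTheory

/-- Partial derivative of u : ℝ × ℝ → ℝ with respect to the second coordinate. -/
noncomputable def partialY (u : ℝ × ℝ → ℝ) (p : ℝ × ℝ) : ℝ :=
  fderiv ℝ u p (0, 1)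

/-- Second partial derivative of u : ℝ × ℝ → ℝ with respect to the second coordinate. -/
noncomputable def partialYY (u : ℝ × ℝ → ℝ) (p : ℝ × ℝ) : ℝ :=
  fderiv ℝ (partialY u) p (0, 1)

/-- The operator R_θ u := −θ Δt μ ∂²u/∂y² + u. -/
noncomputable def Rop (θ Δt μ : ℝ) (u : ℝ × ℝ → ℝ) (p : ℝ × ℝ) : ℝ :=
  -θ * Δt * μ * partialYY u p + u p

theorem integral_mul_deriv_deriv_eq_neg_integral_deriv_sq {g : ℝ → ℝ} (hg : ContDiff ℝ 2 g)
    (hs : HasCompactSupport g) :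
    ∫ y, g y * deriv (deriv g) y = -∫ y, deriv g y ^ 2 := by
  have hg' : ContDiff ℝ 1 (deriv g) := hg.iterate_deriv' 1 1
  have hg'' : Continuous (deriv (deriv g)) := (hg.iterate_deriv' 0 2).continuous
  have h := integral_mul_deriv_eq_deriv_mul_of_integrable
    (fun y _ ↦ (hg.differentiable two_ne_zero y).hasDerivAt)
    (fun y _ ↦ (hg'.differentiable one_ne_zero y).hasDerivAt)
    ((hg.continuous.mul hg'').integrable_of_hasCompactSupport hs.mul_right)
    ((hg'.continuous.mul hg'.continuous).integrable_of_hasCompactSupport hs.deriv.mul_right)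
    ((hg.continuous.mul hg'.continuous).integrable_of_hasCompactSupport hs.mul_right)
  simpa only [Pi.mul_apply, sq] using h

theorem deriv_apply_prodMk_eq_partialY {u : ℝ × ℝ → ℝ} {x y : ℝ}
    (hu : DifferentiableAt ℝ u (x, y)) :
    deriv (fun t ↦ u (x, t)) y = partialY u (x, y) := by
  have hslice : HasDerivAt (fun t : ℝ ↦ (x, t)) (0, 1) y :=
    (hasDerivAt_const y x).prodMk (hasDerivAt_id y)
  exact (hu.hasFDerivAt.comp_hasDerivAt y hslice).deriv

theorem ContDiff.partialY {m n : WithTop ℕ∞} {u : ℝ × ℝ → ℝ} (hu : ContDiff ℝ n u)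
    (hmn : m + 1 ≤ n) : ContDiff ℝ m (partialY u) :=
  (hu.fderiv_right hmn).clm_apply contDiff_const

theorem HasCompactSupport.partialY {u : ℝ × ℝ → ℝ} (hu : HasCompactSupport u) :
    HasCompactSupport (partialY u) :=
  hu.fderiv_apply ℝ (0, 1)

theorem ContDiff.continuous_partialYY {u : ℝ × ℝ → ℝ} (hu : ContDiff ℝ 2 u) :
    Continuous (partialYY u) :=
  ((hu.partialY one_add_one_eq_two.le).partialY (zero_add 1).le).continuous

theorem HasCompactSupport.partialYY {u : ℝ × ℝ → ℝ} (hu : HasCompactSupport u) :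
    HasCompactSupport (partialYY u) :=
  hu.partialY.partialY

theorem HasCompactSupport.comp_prodMk {u : ℝ × ℝ → ℝ} (hu : HasCompactSupport u) (x : ℝ) :
    HasCompactSupport (fun t ↦ u (x, t)) := by
  refine HasCompactSupport.intro (hu.image continuous_snd) fun y hy ↦ ?_
  by_contra h
  exact hy ⟨(x, y), subset_tsupport u h, rfl⟩

theorem integral_mul_partialYY_eq_neg_integral_partialY_sq {u : ℝ × ℝ → ℝ}
    (hu : ContDiff ℝ 2 u) (hs : HasCompactSupport u) :
    ∫ p, u p * partialYY u p = -∫ p, partialY u p ^ 2 := by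
  have hv : ContDiff ℝ 1 (partialY u) := hu.partialY one_add_one_eq_two.le
  have hw : Continuous (partialYY u) := hu.continuous_partialYY
  have huw : Integrable (fun p ↦ u p * partialYY u p) :=
    (hu.continuous.mul hw).integrable_of_hasCompactSupport hs.mul_right
  have hv2 : Integrable (fun p ↦ partialY u p ^ 2) :=
    (hv.continuous.pow 2).integrable_of_hasCompactSupport (by
      simpa only [sq] using hs.partialY.mul_right)
  rw [Measure.volume_eq_prod] at huw hv2 ⊢
  rw [integral_prod _ huw, integral_prod _ hv2, ← integral_neg]
  congr 1 with x
  have hd : deriv (fun t ↦ u (x, t)) = fun t ↦ partialY u (x, t) :=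
    funext fun t ↦ deriv_apply_prodMk_eq_partialY (hu.differentiable two_ne_zero _)
  have hdd : deriv (deriv fun t ↦ u (x, t)) = fun t ↦ partialYY u (x, t) := by
    rw [hd]
    exact funext fun t ↦ deriv_apply_prodMk_eq_partialY (hv.differentiable one_ne_zero _)
  have h := integral_mul_deriv_deriv_eq_neg_integral_deriv_sq (g := fun t ↦ u (x, t))
    (hu.comp (contDiff_const.prodMk contDiff_id)) (hs.comp_prodMk x)
  rwa [hdd, hd] at h

theorem integral_Rop_sq {u : ℝ × ℝ → ℝ} (hu : ContDiff ℝ 2 u) (hs : HasCompactSupport u)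
    (c Δt μ : ℝ) :
    ∫ p, Rop c Δt μ u p ^ 2 = (∫ p, u p ^ 2) + 2 * c * (Δt * μ) * (∫ p, partialY u p ^ 2)
      + c ^ 2 * (Δt * μ) ^ 2 * ∫ p, partialYY u p ^ 2 := by
  have hw : Continuous (partialYY u) := hu.continuous_partialYY
  have hu2 : Integrable (fun p ↦ u p ^ 2) :=
    (hu.continuous.pow 2).integrable_of_hasCompactSupport (by simpa only [sq] using hs.mul_right)
  have huw : Integrable (fun p ↦ u p * partialYY u p) :=
    (hu.continuous.mul hw).integrable_of_hasCompactSupport hs.mul_right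
  have hw2 : Integrable (fun p ↦ partialYY u p ^ 2) :=
    (hw.pow 2).integrable_of_hasCompactSupport (by simpa only [sq] using hs.partialYY.mul_right)
  have hu2_uw : Integrable (fun p ↦ u p ^ 2 - 2 * c * (Δt * μ) * (u p * partialYY u p)) :=
    hu2.sub (huw.const_mul _)
  calc ∫ p, Rop c Δt μ u p ^ 2
      = ∫ p, u p ^ 2 - 2 * c * (Δt * μ) * (u p * partialYY u p)
          + c ^ 2 * (Δt * μ) ^ 2 * partialYY u p ^ 2 := by
        congr 1 with p
        rw [Rop]
        ring
    _ = (∫ p, u p ^ 2) - 2 * c * (Δt * μ) * (∫ p, u p * partialYY u p)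
          + c ^ 2 * (Δt * μ) ^ 2 * ∫ p, partialYY u p ^ 2 := by
        rw [integral_add hu2_uw (hw2.const_mul _),
          integral_sub hu2 (huw.const_mul _), integral_const_mul, integral_const_mul]
    _ = _ := by
        rw [integral_mul_partialYY_eq_neg_integral_partialY_sq hu hs]
        ring

/-- Let μ > 0, Δt > 0, θ ≥ 1/2. Then for every C² function u : ℝ² → ℝ
with compact support, ‖R_{θ−1} u‖_{L²} ≤ ‖R_θ u‖_{L²}, i.e.
∫ (u − (θ−1)Δtμ ∂²u/∂y²)² ≤ ∫ (u − θΔtμ ∂²u/∂y²)². -/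
theorem stmt5
    (μ Δt θ : ℝ) (hμ : 0 < μ) (hΔt : 0 < Δt) (hθ : 1 / 2 ≤ θ)
    (u : ℝ × ℝ → ℝ)
    (hu : ContDiff ℝ 2 u)
    (hsupp : HasCompactSupport u) :
    ∫ p, (Rop (θ - 1) Δt μ u p) ^ 2 ≤ ∫ p, (Rop θ Δt μ u p) ^ 2 := by
  rw [integral_Rop_sq hu hsupp, integral_Rop_sq hu hsupp, ← sub_nonneg]
  have hY : 0 ≤ ∫ p, partialY u p ^ 2 := integral_nonneg fun p ↦ sq_nonneg _
  have hYY : 0 ≤ ∫ p, partialYY u p ^ 2 := integral_nonneg fun p ↦ sq_nonneg _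
  have ha : 0 ≤ Δt * μ := (mul_pos hΔt hμ).le
  have hθ' : 0 ≤ 2 * θ - 1 := by linarith
  calc 0 ≤ 2 * (Δt * μ) * (∫ p, partialY u p ^ 2)
        + (2 * θ - 1) * (Δt * μ) ^ 2 * ∫ p, partialYY u p ^ 2 := by positivity
    _ = _ := by ring
end

section
/- Let μ > 0, Δt > 0, θ ∈ (0,1) and ρ ∈ (0,1) be real numbers satisfying (1−ρ)/2 ≤ 2Δt μ (1 − θ(1−ρ)) and (1−θ)² ≤ ρ θ². Then for all real numbers a, b, c ≥ 0 satisfying the Friedrichs-type constraint a ≤ b/2, one has a + 2(θ−1)Δt μ b + (θ−1)² Δt² μ² c ≤ ρ ( a + 2θΔt μ b + θ² Δt² μ² c ). -/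
/-!
The difference of the two sides is linear in `(a, b, c)`:
`ρ R - L = (1 - ρ) (b/2 - a) + (2τ(1 - θ(1 - ρ)) - (1 - ρ)/2) b + (ρθ² - (1 - θ)²) τ² c`
with `τ = Δt μ`. The Friedrichs constraint and the two conditions on the parameters make
each of the three terms nonnegative.
-/

lemma theta_scheme_contraction {τ θ ρ a b c : ℝ} (hρ : ρ ≤ 1)
    (hcond1 : (1 - ρ) / 2 ≤ 2 * τ * (1 - θ * (1 - ρ)))
    (hcond2 : (1 - θ) ^ 2 ≤ ρ * θ ^ 2)
    (hb : 0 ≤ b) (hc : 0 ≤ c) (hFriedrichs : a ≤ b / 2) :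
    a + 2 * (θ - 1) * τ * b + (θ - 1) ^ 2 * τ ^ 2 * c ≤
      ρ * (a + 2 * θ * τ * b + θ ^ 2 * τ ^ 2 * c) := by
  have hdiff : ρ * (a + 2 * θ * τ * b + θ ^ 2 * τ ^ 2 * c)
      - (a + 2 * (θ - 1) * τ * b + (θ - 1) ^ 2 * τ ^ 2 * c)
      = (1 - ρ) * (b / 2 - a) + (2 * τ * (1 - θ * (1 - ρ)) - (1 - ρ) / 2) * b
        + (ρ * θ ^ 2 - (1 - θ) ^ 2) * (τ ^ 2 * c) := by ring
  rw [← sub_nonneg, hdiff]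
  have ha_term : 0 ≤ (1 - ρ) * (b / 2 - a) := mul_nonneg (by linarith) (by linarith)
  have hb_term : 0 ≤ (2 * τ * (1 - θ * (1 - ρ)) - (1 - ρ) / 2) * b :=
    mul_nonneg (by linarith) hb
  have hc_term : 0 ≤ (ρ * θ ^ 2 - (1 - θ) ^ 2) * (τ ^ 2 * c) :=
    mul_nonneg (by linarith) (by positivity)
  linarith

theorem stmt7_general (μ Δt θ ρ : ℝ)
    (hρ : ρ ∈ Set.Ioo (0 : ℝ) 1)
    (hcond1 : (1 - ρ) / 2 ≤ 2 * Δt * μ * (1 - θ * (1 - ρ)))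
    (hcond2 : (1 - θ) ^ 2 ≤ ρ * θ ^ 2)
    (a b c : ℝ) (hb : 0 ≤ b) (hc : 0 ≤ c)
    (hFriedrichs : a ≤ b / 2) :
    a + 2 * (θ - 1) * Δt * μ * b + (θ - 1) ^ 2 * Δt ^ 2 * μ ^ 2 * c ≤
      ρ * (a + 2 * θ * Δt * μ * b + θ ^ 2 * Δt ^ 2 * μ ^ 2 * c) := by
  have h := theta_scheme_contraction (τ := Δt * μ) hρ.2.le
    (by rwa [← mul_assoc]) hcond2 hb hc hFriedrichs
  simp only [mul_pow, ← mul_assoc] at h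
  exact h

/-- Let μ > 0, Δt > 0, θ ∈ (0,1) and ρ ∈ (0,1) satisfy
(1−ρ)/2 ≤ 2Δt μ (1 − θ(1−ρ)) and (1−θ)² ≤ ρ θ². Then for all a, b, c ≥ 0 with
a ≤ b/2, one has a + 2(θ−1)Δt μ b + (θ−1)² Δt² μ² c ≤ ρ (a + 2θΔt μ b + θ² Δt² μ² c). -/
theorem stmt7 (μ Δt θ ρ : ℝ) (hμ : 0 < μ) (hΔt : 0 < Δt)
    (hθ : θ ∈ Set.Ioo (0 : ℝ) 1) (hρ : ρ ∈ Set.Ioo (0 : ℝ) 1)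
    (hcond1 : (1 - ρ) / 2 ≤ 2 * Δt * μ * (1 - θ * (1 - ρ)))
    (hcond2 : (1 - θ) ^ 2 ≤ ρ * θ ^ 2)
    (a b c : ℝ) (ha : 0 ≤ a) (hb : 0 ≤ b) (hc : 0 ≤ c)
    (hFriedrichs : a ≤ b / 2) :
    a + 2 * (θ - 1) * Δt * μ * b + (θ - 1) ^ 2 * Δt ^ 2 * μ ^ 2 * c ≤
      ρ * (a + 2 * θ * Δt * μ * b + θ ^ 2 * Δt ^ 2 * μ ^ 2 * c) :=
  stmt7_general μ Δt θ ρ hρ hcond1 hcond2 a b c hb hc hFriedrichs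
end

section
/- Let μ > 0, σ > 0 and Δt > 0 be real constants, let θ ≥ 1/2, and let β : ℝ² → ℝ be a continuously differentiable function with ∂β/∂x ≤ 0 everywhere. Then for every infinitely differentiable function u : ℝ² → ℝ with compact support, ∫_{ℝ²} ( −(θ−1)Δt μ (∂²u/∂x²) + (θ−1)Δt β (∂u/∂x) + (1 + (θ−1)Δt σ) u )² dx dy ≤ ∫_{ℝ²} ( −θΔt μ (∂²u/∂x²) + θΔt β (∂u/∂x) + (1 + θΔt σ) u )² dx dy. In other words, ‖B_{θ−1} u‖_{L²} ≤ ‖B_θ u‖_{L²}, where B_θ u := −θΔt μ ∂²u/∂x² + θΔt β ∂u/∂x + (1 + θΔt σ) u. -/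
open MeasureTheory Set

/-- Partial derivative of u : ℝ × ℝ → ℝ with respect to the first coordinate. -/
noncomputable def partialX (u : ℝ × ℝ → ℝ) (p : ℝ × ℝ) : ℝ :=
  fderiv ℝ u p (1, 0)

/-- Second partial derivative of u : ℝ × ℝ → ℝ with respect to the first coordinate. -/
noncomputable def partialXX (u : ℝ × ℝ → ℝ) (p : ℝ × ℝ) : ℝ :=
  fderiv ℝ (partialX u) p (1, 0)

/-- The operator B_θ u := −θ Δt μ ∂²u/∂x² + θ Δt β ∂u/∂x + (1 + θ Δt σ) u. -/
noncomputable def Bop (θ Δt μ σ : ℝ) (β : ℝ × ℝ → ℝ) (u : ℝ × ℝ → ℝ) (p : ℝ × ℝ) : ℝ :=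
  -θ * Δt * μ * partialXX u p + θ * Δt * β p * partialX u p + (1 + θ * Δt * σ) * u p

/-- 1D: the integral of the derivative of a C¹ compactly supported function vanishes. -/
lemma integral_deriv_zero (g : ℝ → ℝ) (hg : ContDiff ℝ 1 g) (hs : HasCompactSupport g) :
    ∫ x, deriv g x = 0 := by
  have hint : Integrable (deriv g) :=
    (hg.continuous_deriv le_rfl).integrable_of_hasCompactSupport hs.deriv
  rw [← intervalIntegral.integral_Iic_add_Ioi (b := 0) hint.integrableOn hint.integrableOn,
    hs.integral_Iic_deriv_eq hg 0, hs.integral_Ioi_deriv_eq hg 0]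
  ring

/-- 2D: the integral of the x-partial derivative of a C¹ compactly supported function vanishes. -/
lemma integral_partialX_zero (F : ℝ × ℝ → ℝ) (hF : ContDiff ℝ 1 F)
    (hs : HasCompactSupport F) : ∫ p, partialX F p = 0 := by
  have hcont : Continuous (partialX F) :=
    (hF.continuous_fderiv one_ne_zero).clm_apply continuous_const
  have hcs : HasCompactSupport (partialX F) := hs.fderiv_apply ℝ (1, 0)
  have hint : Integrable (partialX F) := hcont.integrable_of_hasCompactSupport hcs
  rw [Measure.volume_eq_prod] at hint ⊢
  rw [integral_prod_symm _ hint]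
  have hy : ∀ y : ℝ, ∫ x, partialX F (x, y) = 0 := by
    intro y
    have hg : ContDiff ℝ 1 (fun x => F (x, y)) := hF.comp (contDiff_id.prodMk contDiff_const)
    have hgs : HasCompactSupport (fun x => F (x, y)) := by
      apply HasCompactSupport.intro (hs.isCompact.image continuous_fst)
      intro x hx
      exact image_eq_zero_of_notMem_tsupport (fun hmem => hx ⟨(x, y), hmem, rfl⟩)
    have hderiv : ∀ x : ℝ, deriv (fun x => F (x, y)) x = partialX F (x, y) := by
      intro x
      have h1 : HasFDerivAt (fun x : ℝ => (x, y)) (ContinuousLinearMap.inl ℝ ℝ ℝ) x :=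
        hasFDerivAt_prodMk_left x y
      have h2 : HasFDerivAt F (fderiv ℝ F (x, y)) (x, y) :=
        (hF.differentiable one_ne_zero (x, y)).hasFDerivAt
      have h3 := (h2.comp x h1).hasDerivAt
      have h4 : HasDerivAt (fun x => F (x, y)) (fderiv ℝ F (x, y) (1, 0)) x := by
        exact h3
      exact h4.deriv
    simp_rw [← hderiv]
    exact integral_deriv_zero _ hg hgs
  simp [hy]

lemma integrable_helper {f : ℝ × ℝ → ℝ} (hf : Continuous f) {K : Set (ℝ × ℝ)}
    (hK : IsCompact K) (h0 : ∀ p ∉ K, f p = 0) : Integrable f :=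
  hf.integrable_of_hasCompactSupport (HasCompactSupport.intro hK h0)

/-- Let μ > 0, σ > 0, Δt > 0, θ ≥ 1/2, and let β : ℝ² → ℝ be C¹ with
∂β/∂x ≤ 0 everywhere. Then for every smooth (C^∞) function u : ℝ² → ℝ with compact
support, ‖B_{θ−1} u‖_{L²} ≤ ‖B_θ u‖_{L²}. -/
theorem stmt10
    (μ σ Δt θ : ℝ) (hμ : 0 < μ) (hσ : 0 < σ) (hΔt : 0 < Δt) (hθ : 1 / 2 ≤ θ)
    (β : ℝ × ℝ → ℝ) (hβ : ContDiff ℝ 1 β)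
    (hβx : ∀ p, partialX β p ≤ 0)
    (u : ℝ × ℝ → ℝ) (hu : ContDiff ℝ (⊤ : ℕ∞) u) (hsupp : HasCompactSupport u) :
    ∫ p, (Bop (θ - 1) Δt μ σ β u p) ^ 2 ≤ ∫ p, (Bop θ Δt μ σ β u p) ^ 2 := by
  -- regularity facts
  have hu1 : ContDiff ℝ (⊤ : ℕ∞) (fderiv ℝ u) := hu.fderiv_right (by simp)
  have hv_cd : ContDiff ℝ (⊤ : ℕ∞) (partialX u) := hu1.clm_apply contDiff_const
  have hv_cs : HasCompactSupport (partialX u) := hsupp.fderiv_apply ℝ (1, 0)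
  have hw_cd : ContDiff ℝ (⊤ : ℕ∞) (fderiv ℝ (partialX u)) := hv_cd.fderiv_right (by simp)
  have hw_cont : Continuous (partialXX u) :=
    (hw_cd.clm_apply contDiff_const).continuous
  have hw_cs : HasCompactSupport (partialXX u) := hv_cs.fderiv_apply ℝ (1, 0)
  have hβc : Continuous β := hβ.continuous
  have hbx_cont : Continuous (partialX β) :=
    (hβ.continuous_fderiv one_ne_zero).clm_apply continuous_const
  have huc : Continuous u := hu.continuous
  have hvc : Continuous (partialX u) := hv_cd.continuous
  -- the compact set outside which everything vanishes
  set K : Set (ℝ × ℝ) :=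
    tsupport u ∪ tsupport (partialX u) ∪ tsupport (partialXX u) with hKdef
  have hKc : IsCompact K := (hsupp.union hv_cs).union hw_cs
  have hz : ∀ p ∉ K, u p = 0 ∧ partialX u p = 0 ∧ partialXX u p = 0 := by
    intro p hp
    simp only [hKdef, Set.mem_union, not_or] at hp
    exact ⟨image_eq_zero_of_notMem_tsupport hp.1.1,
      image_eq_zero_of_notMem_tsupport hp.1.2, image_eq_zero_of_notMem_tsupport hp.2⟩
  -- Integration by parts 1 : ∫ (u·u_xx + u_x·u_x) = 0
  have hp1 : ∀ p, partialX (fun q => u q * partialX u q) p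
      = u p * partialXX u p + partialX u p * partialX u p := by
    intro p
    show fderiv ℝ (fun q => u q * partialX u q) p (1, 0) = _
    rw [fderiv_fun_mul (hu.differentiable (by simp) p) (hv_cd.differentiable (by simp) p)]
    simp only [ContinuousLinearMap.add_apply, ContinuousLinearMap.smul_apply, smul_eq_mul]
    simp only [partialXX, partialX]
    all_goals ring
  have int1 : ∫ p, (u p * partialXX u p + partialX u p * partialX u p) = 0 := by
    simp_rw [← hp1]
    exact integral_partialX_zero _ ((hu.of_le (by simp)).mul (hv_cd.of_le (by simp)))
      (by
        apply HasCompactSupport.intro hKc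
        intro p hp
        obtain ⟨h1, h2, h3⟩ := hz p hp
        simp [h1, h2])
  -- Integration by parts 2 : ∫ (β_x·u² + 2 β u u_x) = 0
  have hp2 : ∀ p, partialX (fun q => β q * (u q * u q)) p
      = partialX β p * u p ^ 2 + 2 * (β p * u p * partialX u p) := by
    intro p
    show fderiv ℝ (fun q => β q * (u q * u q)) p (1, 0) = _
    rw [fderiv_fun_mul (hβ.differentiable one_ne_zero p)
      ((hu.differentiable (by simp) p).fun_mul (hu.differentiable (by simp) p))]
    simp only [ContinuousLinearMap.add_apply, ContinuousLinearMap.smul_apply, smul_eq_mul]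
    rw [fderiv_fun_mul (hu.differentiable (by simp) p) (hu.differentiable (by simp) p)]
    simp only [ContinuousLinearMap.add_apply, ContinuousLinearMap.smul_apply, smul_eq_mul]
    simp only [partialX]
    all_goals ring
  have int2 : ∫ p, (partialX β p * u p ^ 2 + 2 * (β p * u p * partialX u p)) = 0 := by
    simp_rw [← hp2]
    exact integral_partialX_zero _ (hβ.mul ((hu.of_le (by simp)).mul (hu.of_le (by simp))))
      (by
        apply HasCompactSupport.intro hKc
        intro p hp
        obtain ⟨h1, _, _⟩ := hz p hp
        simp [h1])
  -- integrability of the pieces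
  have intuw : Integrable (fun p => u p * partialXX u p) :=
    integrable_helper (huc.mul hw_cont) hKc (fun p hp => by
      obtain ⟨h1, _, _⟩ := hz p hp; simp [h1])
  have intvv : Integrable (fun p => partialX u p * partialX u p) :=
    integrable_helper (hvc.mul hvc) hKc (fun p hp => by
      obtain ⟨_, h2, _⟩ := hz p hp; simp [h2])
  have intP : Integrable (fun p => partialX β p * u p ^ 2) :=
    integrable_helper (hbx_cont.mul (huc.pow 2)) hKc (fun p hp => by
      obtain ⟨h1, _, _⟩ := hz p hp; simp [h1])
  have intQ : Integrable (fun p => β p * u p * partialX u p) :=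
    integrable_helper ((hβc.mul huc).mul hvc) hKc (fun p hp => by
      obtain ⟨h1, _, _⟩ := hz p hp; simp [h1])
  have intL2 : Integrable (fun p =>
      (-μ * partialXX u p + β p * partialX u p + σ * u p) ^ 2) :=
    integrable_helper ((((continuous_const.mul hw_cont).add (hβc.mul hvc)).add
      (continuous_const.mul huc)).pow 2) hKc (fun p hp => by
      obtain ⟨h1, h2, h3⟩ := hz p hp; simp [h1, h2, h3])
  have intuu : Integrable (fun p => u p ^ 2) :=
    integrable_helper (huc.pow 2) hKc (fun p hp => by
      obtain ⟨h1, _, _⟩ := hz p hp; simp [h1])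
  have hBopc : ∀ θ' : ℝ, Continuous (fun p => (Bop θ' Δt μ σ β u p) ^ 2) := by
    intro θ'
    simp only [Bop]
    exact (((continuous_const.mul hw_cont).add
      ((continuous_const.mul hβc).mul hvc)).add (continuous_const.mul huc)).pow 2
  have intA : Integrable (fun p => (Bop (θ - 1) Δt μ σ β u p) ^ 2) :=
    integrable_helper (hBopc _) hKc (fun p hp => by
      obtain ⟨h1, h2, h3⟩ := hz p hp; simp [Bop, h1, h2, h3])
  have intB : Integrable (fun p => (Bop θ Δt μ σ β u p) ^ 2) :=
    integrable_helper (hBopc _) hKc (fun p hp => by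
      obtain ⟨h1, h2, h3⟩ := hz p hp; simp [Bop, h1, h2, h3])
  -- key pointwise identity
  have key : ∀ p, (Bop θ Δt μ σ β u p) ^ 2 - (Bop (θ - 1) Δt μ σ β u p) ^ 2
      = ((2 * θ - 1) * Δt ^ 2) *
          (-μ * partialXX u p + β p * partialX u p + σ * u p) ^ 2
        + (2 * Δt * μ) * (-(u p * partialXX u p))
        + (2 * Δt) * (β p * u p * partialX u p)
        + (2 * Δt * σ) * u p ^ 2 := by
    intro p
    simp only [Bop]
    ring
  rw [← sub_nonneg, ← integral_sub intB intA]
  simp_rw [key]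
  have intnw : Integrable (fun p => -(u p * partialXX u p)) := intuw.neg
  have i1 : Integrable (fun p =>
      ((2 * θ - 1) * Δt ^ 2) * (-μ * partialXX u p + β p * partialX u p + σ * u p) ^ 2) :=
    intL2.const_mul _
  have i2 : Integrable (fun p => (2 * Δt * μ) * -(u p * partialXX u p)) :=
    intnw.const_mul _
  have i3 : Integrable (fun p => (2 * Δt) * (β p * u p * partialX u p)) :=
    intQ.const_mul _
  have i4 : Integrable (fun p => (2 * Δt * σ) * u p ^ 2) :=
    intuu.const_mul _
  have i12 : Integrable (fun p =>
      ((2 * θ - 1) * Δt ^ 2) * (-μ * partialXX u p + β p * partialX u p + σ * u p) ^ 2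
      + (2 * Δt * μ) * -(u p * partialXX u p)) := i1.add i2
  have i123 : Integrable (fun p =>
      ((2 * θ - 1) * Δt ^ 2) * (-μ * partialXX u p + β p * partialX u p + σ * u p) ^ 2
      + (2 * Δt * μ) * -(u p * partialXX u p)
      + (2 * Δt) * (β p * u p * partialX u p)) := i12.add i3
  rw [integral_add i123 i4, integral_add i12 i3, integral_add i1 i2,
    integral_const_mul, integral_const_mul, integral_const_mul, integral_const_mul]
  have h1 : 0 ≤ ∫ p, (-μ * partialXX u p + β p * partialX u p + σ * u p) ^ 2 :=
    integral_nonneg fun p => sq_nonneg _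
  have h2 : 0 ≤ ∫ p, -(u p * partialXX u p) := by
    rw [integral_neg]
    rw [integral_add intuw intvv] at int1
    have hvv : 0 ≤ ∫ p, partialX u p * partialX u p :=
      integral_nonneg fun p => mul_self_nonneg _
    linarith
  have h3 : 0 ≤ ∫ p, β p * u p * partialX u p := by
    rw [integral_add intP (intQ.const_mul 2), integral_const_mul] at int2
    have hP : (∫ p, partialX β p * u p ^ 2) ≤ 0 :=
      integral_nonpos fun p => mul_nonpos_of_nonpos_of_nonneg (hβx p) (sq_nonneg _)
    linarith
  have h4 : 0 ≤ ∫ p, u p ^ 2 := integral_nonneg fun p => sq_nonneg _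
  have hc1 : (0:ℝ) ≤ (2 * θ - 1) * Δt ^ 2 := by nlinarith
  have hc2 : (0:ℝ) ≤ 2 * Δt * μ := by positivity
  have hc3 : (0:ℝ) ≤ 2 * Δt := by positivity
  have hc4 : (0:ℝ) ≤ 2 * Δt * σ := by positivity
  exact add_nonneg (add_nonneg (add_nonneg (mul_nonneg hc1 h1) (mul_nonneg hc2 h2))
    (mul_nonneg hc3 h3)) (mul_nonneg hc4 h4)
end
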